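/- arXiv:2209.14729 — 3 statements merged into one kernel-verified Lean document; each statement's English description precedes it below -/
import Mathlib

section
/- Let f : R³ → [0,∞) be measurable with ∫ f dv, ∫ |v| f dv, ∫ |v|² f dv and ∫ f² dv finite, and suppose ρ_f := ∫ f dv > 0. Define u_f := ρ_f^{-1} ∫ v f dv and 3 ρ_f T_f := ∫ |v − u_f|² f dv. Then there exists a universal constant C > 0 (independent of f) such that ρ_f ≤ C (∫ f² dv)^{1/2} T_f^{3/4}. -/
open Real MeasureTheory Metric

/-- There is a universal constant `C > 0` such that for every measurable `f : ℝ³ → [0,∞)`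
with finite moments and `ρ_f = ∫ f > 0`, if `u_f` and `T_f` are the associated bulk velocity
and temperature (`ρ_f u_f = ∫ v f`, `3 ρ_f T_f = ∫ |v − u_f|² f`), then
`ρ_f ≤ C (∫ f²)^{1/2} T_f^{3/4}`. -/
theorem density_le_temperature_l2 :
    ∃ C > (0 : ℝ), ∀ (f : EuclideanSpace ℝ (Fin 3) → ℝ)
      (ρ T : ℝ) (u : EuclideanSpace ℝ (Fin 3)),
      Measurable f → (∀ v, 0 ≤ f v) →
      Integrable f →
      Integrable (fun v => ‖v‖ * f v) →
      Integrable (fun v => ‖v‖ ^ 2 * f v) →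
      Integrable (fun v => (f v) ^ 2) →
      Integrable (fun v => f v • v) →
      ρ = ∫ v, f v → 0 < ρ →
      ρ • u = ∫ v, f v • v →
      3 * ρ * T = ∫ v, ‖v - u‖ ^ 2 * f v →
      ρ ≤ C * Real.sqrt (∫ v, (f v) ^ 2) * T ^ ((3 : ℝ) / 4) := by
  set c : ℝ := (volume (Metric.ball (0 : EuclideanSpace ℝ (Fin 3)) 1)).toReal with hc
  clear_value c
  have hc0 : 0 < c := by
    rw [hc]
    exact ENNReal.toReal_pos (measure_ball_pos volume 0 one_pos).ne' measure_ball_lt_top.ne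
  refine ⟨2 * Real.sqrt c * 6 ^ ((3:ℝ)/4),
    mul_pos (mul_pos two_pos (Real.sqrt_pos.2 hc0)) (Real.rpow_pos_of_pos (by norm_num) _), ?_⟩
  intro f ρ T u hfm hf0 hfi h1 h2 hfsq hfv hρ hρ0 hu hT
  -- integrability of second moment around u
  have hgm : Measurable fun v : EuclideanSpace ℝ (Fin 3) => ‖v - u‖ ^ 2 * f v :=
    (((measurable_id.sub measurable_const).norm.pow_const 2).mul hfm)
  have hg : Integrable (fun v : EuclideanSpace ℝ (Fin 3) => ‖v - u‖ ^ 2 * f v) := by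
    refine Integrable.mono' ((h2.add (h1.const_mul (2 * ‖u‖))).add (hfi.const_mul (‖u‖^2)))
      hgm.aestronglyMeasurable (Filter.Eventually.of_forall fun v => ?_)
    have hnv : ‖v - u‖ ≤ ‖v‖ + ‖u‖ := norm_sub_le v u
    have h0 := hf0 v
    rw [Real.norm_of_nonneg (mul_nonneg (by positivity) h0)]
    simp only [Pi.add_apply]
    nlinarith [mul_le_mul_of_nonneg_right (pow_le_pow_left₀ (norm_nonneg (v - u)) hnv 2) h0,
      norm_nonneg v, norm_nonneg u]
  have hg0 : (0:ℝ) ≤ ∫ v, ‖v - u‖ ^ 2 * f v :=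
    integral_nonneg fun v => mul_nonneg (by positivity) (hf0 v)
  -- T > 0
  have hTnn : 0 ≤ T := by nlinarith
  have hT0 : 0 < T := by
    rcases hTnn.lt_or_eq with h | h
    · exact h
    exfalso
    have hZ : ∫ v, ‖v - u‖ ^ 2 * f v = 0 := by rw [← hT, ← h]; ring
    have hae : ∀ᵐ v : EuclideanSpace ℝ (Fin 3), ‖v - u‖ ^ 2 * f v = 0 :=
      (integral_eq_zero_iff_of_nonneg (fun v => mul_nonneg (by positivity) (hf0 v)) hg).1 hZ
    have hne : ∀ᵐ v : EuclideanSpace ℝ (Fin 3), v ≠ u := by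
      have h0 : volume ({u} : Set (EuclideanSpace ℝ (Fin 3))) = 0 := measure_singleton u
      rw [ae_iff]
      simpa using h0
    have hf00 : ∀ᵐ v : EuclideanSpace ℝ (Fin 3), f v = 0 := by
      filter_upwards [hae, hne] with v hv hvne
      have : ‖v - u‖ ^ 2 ≠ 0 :=
        pow_ne_zero 2 (norm_ne_zero_iff.2 (sub_ne_zero.2 hvne))
      exact (mul_eq_zero.1 hv).resolve_left this
    have : ρ = 0 := by rw [hρ, integral_eq_zero_of_ae hf00]
    linarith
  -- I₂ > 0
  set I₂ : ℝ := ∫ v, (f v) ^ 2 with hI₂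
  clear_value I₂
  have hI2nn : 0 ≤ I₂ := by
    rw [hI₂]; exact integral_nonneg fun v => by positivity
  have hI2 : 0 < I₂ := by
    rcases hI2nn.lt_or_eq with h | h
    · exact h
    exfalso
    have hae : ∀ᵐ v : EuclideanSpace ℝ (Fin 3), (f v) ^ 2 = 0 :=
      (integral_eq_zero_iff_of_nonneg (fun v => by positivity) hfsq).1 (hI₂.symm.trans h.symm)
    have hf00 : ∀ᵐ v : EuclideanSpace ℝ (Fin 3), f v = 0 := by
      filter_upwards [hae] with v hv
      exact (pow_eq_zero_iff two_ne_zero).1 hv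
    have : ρ = 0 := by rw [hρ, integral_eq_zero_of_ae hf00]
    linarith
  -- radius and epsilon
  set R : ℝ := Real.sqrt (6 * T) with hRdef
  clear_value R
  have hRpos : 0 < R := by rw [hRdef]; exact Real.sqrt_pos.2 (by linarith)
  have hR2 : R ^ 2 = 6 * T := by rw [hRdef]; exact Real.sq_sqrt (by linarith)
  set ε : ℝ := Real.sqrt (c * R ^ 3 / I₂) with hεdef
  clear_value ε
  have hεpos : 0 < ε := by rw [hεdef]; exact Real.sqrt_pos.2 (by positivity)
  have hε2 : ε ^ 2 = c * R ^ 3 / I₂ := by rw [hεdef]; exact Real.sq_sqrt (by positivity)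
  -- tail estimate
  have tail : ∫ v in (Metric.ball u R)ᶜ, f v ≤ ρ / 2 := by
    have step1 : ∫ v in (Metric.ball u R)ᶜ, f v
        ≤ ∫ v in (Metric.ball u R)ᶜ, (1 / R ^ 2) * (‖v - u‖ ^ 2 * f v) := by
      refine setIntegral_mono_on hfi.integrableOn ((hg.const_mul _).integrableOn)
        measurableSet_ball.compl fun v hv => ?_
      have hvR : R ≤ ‖v - u‖ := by
        simpa [Metric.mem_ball, not_lt, dist_eq_norm] using hv
      have hsq : R ^ 2 ≤ ‖v - u‖ ^ 2 := by nlinarith [hRpos.le]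
      have h0 := hf0 v
      calc f v = (1 / R ^ 2) * (R ^ 2 * f v) := by field_simp
        _ ≤ (1 / R ^ 2) * (‖v - u‖ ^ 2 * f v) := by
            apply mul_le_mul_of_nonneg_left (mul_le_mul_of_nonneg_right hsq h0) (by positivity)
    have step2 : ∫ v in (Metric.ball u R)ᶜ, (1 / R ^ 2) * (‖v - u‖ ^ 2 * f v)
        ≤ (1 / R ^ 2) * ∫ v, ‖v - u‖ ^ 2 * f v := by
      rw [integral_const_mul]
      exact mul_le_mul_of_nonneg_left
        (setIntegral_le_integral hg (Filter.Eventually.of_forall fun v =>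
          mul_nonneg (by positivity) (hf0 v)))
        (by positivity)
    have hTne : T ≠ 0 := hT0.ne'
    have : (1 / R ^ 2) * ∫ v, ‖v - u‖ ^ 2 * f v = ρ / 2 := by
      rw [← hT, hR2]; field_simp; ring
    linarith
  -- ball estimate
  have hvol : (volume (Metric.ball u R)).toReal = R ^ 3 * c := by
    rw [Measure.addHaar_ball volume u hRpos.le, ENNReal.toReal_mul,
      ENNReal.toReal_ofReal (by positivity)]
    simp [finrank_euclideanSpace_fin, hc]
  have ball_est : ∫ v in Metric.ball u R, f v ≤ ε / 2 * I₂ + 1 / (2 * ε) * (R ^ 3 * c) := by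
    have pt : ∀ v ∈ Metric.ball u R, f v ≤ ε / 2 * (f v) ^ 2 + 1 / (2 * ε) := by
      intro v _
      have key : ε / 2 * (f v) ^ 2 + 1 / (2 * ε) - f v = (ε * f v - 1) ^ 2 / (2 * ε) := by
        field_simp; ring
      nlinarith [div_nonneg (sq_nonneg (ε * f v - 1)) (by positivity : (0:ℝ) ≤ 2 * ε)]
    have hconst : IntegrableOn (fun _ : EuclideanSpace ℝ (Fin 3) => 1 / (2 * ε))
        (Metric.ball u R) volume :=
      integrableOn_const measure_ball_lt_top.ne
    have step1 : ∫ v in Metric.ball u R, f v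
        ≤ ∫ v in Metric.ball u R, (ε / 2 * (f v) ^ 2 + 1 / (2 * ε)) :=
      setIntegral_mono_on hfi.integrableOn
        (((hfsq.const_mul (ε/2)).integrableOn).add hconst) measurableSet_ball pt
    have step2 : ∫ v in Metric.ball u R, (ε / 2 * (f v) ^ 2 + 1 / (2 * ε))
        = ε / 2 * (∫ v in Metric.ball u R, (f v) ^ 2)
          + 1 / (2 * ε) * (volume (Metric.ball u R)).toReal := by
      rw [integral_add ((hfsq.const_mul (ε/2)).integrableOn) hconst, integral_const_mul,
        setIntegral_const, smul_eq_mul, measureReal_def]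
      ring
    have step3 : (∫ v in Metric.ball u R, (f v) ^ 2) ≤ I₂ := by
      rw [hI₂]
      exact setIntegral_le_integral hfsq (Filter.Eventually.of_forall fun v => by positivity)
    rw [step2, hvol] at step1
    have : ε / 2 * (∫ v in Metric.ball u R, (f v) ^ 2) ≤ ε / 2 * I₂ :=
      mul_le_mul_of_nonneg_left step3 (by positivity)
    linarith
  -- combine
  have hsplit : ρ = (∫ v in Metric.ball u R, f v) + ∫ v in (Metric.ball u R)ᶜ, f v := by
    rw [hρ, integral_add_compl measurableSet_ball hfi]
  have hmain : ρ ≤ 2 * (ε / 2 * I₂ + 1 / (2 * ε) * (R ^ 3 * c)) := by linarith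
  -- evaluate the optimized bound
  set S : ℝ := Real.sqrt (c * R ^ 3 * I₂) with hS
  clear_value S
  have key1 : ε * I₂ = S := by
    rw [hS, show c * R ^ 3 * I₂ = (ε * I₂) ^ 2 by rw [mul_pow, hε2]; field_simp,
      Real.sqrt_sq (by positivity)]
  have key2 : 1 / (2 * ε) * (R ^ 3 * c) = S / 2 := by
    rw [hS, show c * R ^ 3 * I₂ = (R ^ 3 * c / ε) ^ 2 by
      rw [div_pow, hε2]; field_simp, Real.sqrt_sq (by positivity)]
    field_simp
  have hmain2 : ρ ≤ 2 * S := by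
    have : ε / 2 * I₂ + 1 / (2 * ε) * (R ^ 3 * c) = S := by
      rw [key2]; linarith [key1]
    linarith
  -- S = sqrt c * sqrt (R^3) * sqrt I₂
  have hSsplit : S = Real.sqrt c * Real.sqrt (R ^ 3) * Real.sqrt I₂ := by
    rw [hS, Real.sqrt_mul (by positivity), Real.sqrt_mul hc0.le]
  have hsqrtR : Real.sqrt (R ^ 3) = 6 ^ ((3:ℝ)/4) * T ^ ((3:ℝ)/4) := by
    have h1 : Real.sqrt (R ^ 3) = (6 * T) ^ ((3:ℝ)/4) := by
      rw [Real.sqrt_eq_rpow, ← Real.rpow_natCast R 3, ← Real.rpow_mul hRpos.le,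
        hRdef, Real.sqrt_eq_rpow, ← Real.rpow_mul (by linarith : (0:ℝ) ≤ 6 * T)]
      norm_num
    rw [h1, Real.mul_rpow (by norm_num) hT0.le]
  calc ρ ≤ 2 * S := hmain2
    _ = 2 * Real.sqrt c * 6 ^ ((3:ℝ)/4) * Real.sqrt I₂ * T ^ ((3:ℝ)/4) := by
        rw [hSsplit, hsqrtR]; ring
end

section
/- Let f, g : R³ → [0,∞) be measurable with ρ_f := ∫ f dv ≥ c₂ > 0 and ρ_g := ∫ g dv ≥ c₂. Then for k ∈ (1,2) there is C depending only on c₂, k, and an upper bound c₁ on ρ_f, ρ_g, |u_f|, |u_g|, T_f, T_g, such that |ρ_f − ρ_g| + |u_f − u_g| + |T_f − T_g| ≤ C (∫ e^{2⟨v⟩^k}|f − g|² dv)^{1/2}, where u_h := ρ_h^{−1} ∫ v h dv and 3ρ_h T_h := ∫ |v − u_h|² h dv for h ∈ {f, g}. -/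
set_option maxHeartbeats 2000000

open Real MeasureTheory

noncomputable def jap (v : EuclideanSpace ℝ (Fin 3)) : ℝ := Real.sqrt (1 + ‖v‖ ^ 2)

section Aux

open scoped RealInnerProductSpace

local notation "E3" => EuclideanSpace ℝ (Fin 3)

lemma jap_ge_one (v : E3) : 1 ≤ jap v := by
  have h := Real.sqrt_le_sqrt (show (1:ℝ) ≤ 1 + ‖v‖^2 by nlinarith [sq_nonneg ‖v‖])
  rwa [Real.sqrt_one] at h

lemma jap_ge_norm (v : E3) : ‖v‖ ≤ jap v := by
  have h := Real.sqrt_le_sqrt (show ‖v‖^2 ≤ 1 + ‖v‖^2 by linarith)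
  rwa [Real.sqrt_sq (norm_nonneg v)] at h

lemma jap_le (v : E3) : jap v ≤ 1 + ‖v‖ := sqrt_one_add_norm_sq_le v

/-- Master pointwise bound. -/
lemma master {k : ℝ} (hk : 1 ≤ k) (v : E3) :
    (jap v)^4 * (1 + ‖v‖)^4 ≤ 16777216 * Real.exp (2 * jap v ^ k) := by
  set t := jap v with ht
  have hn : 0 ≤ ‖v‖ := norm_nonneg v
  have ht1 : 1 ≤ t := jap_ge_one v
  have htn : ‖v‖ ≤ t := jap_ge_norm v
  have htled : t ≤ 1 + ‖v‖ := jap_le v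
  have h2t : 1 + ‖v‖ ≤ 2 * t := by
    have ht2 : t^2 = 1 + ‖v‖^2 := Real.sq_sqrt (by positivity)
    refine le_of_pow_le_pow_left₀ (n := 2) two_ne_zero (by positivity) ?_
    nlinarith [sq_nonneg (1 - ‖v‖)]
  have htk : t ≤ t ^ k := by
    calc t = t ^ (1:ℝ) := (Real.rpow_one t).symm
    _ ≤ t ^ k := Real.rpow_le_rpow_of_exponent_le ht1 hk
  have hexp : t^4 ≤ 256 * Real.exp t := by
    have h1 : t/4 + 1 ≤ Real.exp (t/4) := by linarith [Real.add_one_le_exp (t/4)]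
    have h2 : (t/4 + 1)^4 ≤ (Real.exp (t/4))^4 := pow_le_pow_left₀ (by positivity) h1 4
    have h3 : (Real.exp (t/4))^4 = Real.exp t := by
      rw [← Real.exp_nat_mul, show ((4:ℕ):ℝ)*(t/4) = t by push_cast; ring]
    have h4 : (t/4)^4 ≤ (t/4+1)^4 := pow_le_pow_left₀ (by positivity) (by linarith) 4
    nlinarith [h2, h3, h4]
  have hA : (1 + ‖v‖)^4 ≤ 16 * t^4 := by
    have := pow_le_pow_left₀ (by positivity) h2t 4
    calc (1+‖v‖)^4 ≤ (2*t)^4 := this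
    _ = 16 * t^4 := by ring
  have hC : Real.exp t * Real.exp t ≤ Real.exp (2 * t ^ k) := by
    rw [← Real.exp_add]
    exact Real.exp_le_exp.2 (by linarith)
  have hB2 : t^4 * t^4 ≤ (256 * Real.exp t) * (256 * Real.exp t) :=
    mul_le_mul hexp hexp (by positivity) (by positivity)
  have hA2 : t^4 * (1+‖v‖)^4 ≤ t^4 * (16 * t^4) :=
    mul_le_mul_of_nonneg_left hA (by positivity)
  nlinarith [Real.exp_pos t, Real.exp_pos (2 * t ^ k)]

lemma le_sqrt_mul_sqrt {a b x : ℝ} (ha : 0 ≤ a) (hb : 0 ≤ b)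
    (h : ∀ ε : ℝ, 0 < ε → 2 * ε * x ≤ a + ε ^ 2 * b) :
    x ≤ Real.sqrt a * Real.sqrt b := by
  have hs : 0 ≤ Real.sqrt a * Real.sqrt b := by positivity
  rcases le_or_gt x 0 with hx | hx
  · linarith
  rcases eq_or_lt_of_le hb with hb0 | hb0
  · exfalso
    have h2 := h ((a + 1) / (2 * x)) (by positivity)
    rw [← hb0] at h2
    have h3 : 2 * ((a + 1) / (2 * x)) * x = a + 1 := by field_simp
    nlinarith
  rcases eq_or_lt_of_le ha with ha0 | ha0
  · exfalso
    have h2 := h (x / b) (by positivity)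
    rw [← ha0] at h2
    have h3 : (x / b)^2 * b = x^2 / b := by field_simp
    rw [h3, zero_add] at h2
    have h4 : 2 * (x / b) * x = 2 * x^2 / b := by ring
    rw [h4] at h2
    have h5 : (2 * x^2 / b) * b ≤ (x^2 / b) * b := mul_le_mul_of_nonneg_right h2 hb0.le
    rw [div_mul_cancel₀ _ hb0.ne', div_mul_cancel₀ _ hb0.ne'] at h5
    nlinarith
  · set s := Real.sqrt a with hsa
    set u := Real.sqrt b with hub
    have hs0 : 0 < s := Real.sqrt_pos.2 ha0
    have hu0 : 0 < u := Real.sqrt_pos.2 hb0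
    have hsq : s^2 = a := Real.sq_sqrt ha
    have huq : u^2 = b := Real.sq_sqrt hb
    have h2 := h (s / u) (by positivity)
    have e1 : (s/u)^2 * b = s^2 := by rw [← huq]; field_simp
    rw [e1, ← hsq] at h2
    -- 2 * (s/u) * x ≤ 2 * s^2
    have e2 : 2 * (s/u) * x * u = 2 * s * x := by field_simp
    have h6 := mul_le_mul_of_nonneg_right h2 hu0.le
    rw [e2] at h6
    nlinarith [h6, hs0, hu0]

lemma integrable_G : Integrable (fun v : E3 => (16777216:ℝ) * (1 + ‖v‖) ^ (-(4:ℝ))) := by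
  refine Integrable.const_mul ?_ _
  exact integrable_one_add_norm (by simp [finrank_euclideanSpace_fin]; norm_num)

lemma key_bound {k : ℝ} (hk : 1 ≤ k) (h w : E3 → ℝ)
    (hw0 : ∀ v, 0 ≤ w v)
    (hwb : ∀ v, w v ^ 2 ≤ (jap v)^4)
    (hI : Integrable (fun v => Real.exp (2 * jap v ^ k) * (h v)^2)) :
    ∫ v, w v * |h v| ≤
      Real.sqrt (∫ v : E3, (16777216:ℝ) * (1 + ‖v‖) ^ (-(4:ℝ))) *
      Real.sqrt (∫ v, Real.exp (2 * jap v ^ k) * (h v)^2) := by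
  set G : E3 → ℝ := fun v => (16777216:ℝ) * (1 + ‖v‖) ^ (-(4:ℝ)) with hG
  set W : E3 → ℝ := fun v => Real.exp (2 * jap v ^ k) with hW
  have hG0 : ∀ v, 0 ≤ G v := fun v => by
    have : (0:ℝ) ≤ (1 + ‖v‖) ^ (-(4:ℝ)) := Real.rpow_nonneg (by positivity) _
    positivity
  have hGW : ∀ v, w v ^ 2 ≤ G v * W v := by
    intro v
    have hp : (0:ℝ) < (1 + ‖v‖)^(4:ℕ) := by positivity
    have hrw : (1 + ‖v‖) ^ (-(4:ℝ)) = ((1 + ‖v‖)^(4:ℕ))⁻¹ := by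
      rw [show (-(4:ℝ)) = -((4:ℕ):ℝ) by norm_num, Real.rpow_neg (by positivity),
        Real.rpow_natCast]
    have hm : w v ^2 * (1+‖v‖)^4 ≤ 16777216 * W v := by
      calc w v ^2 * (1+‖v‖)^4 ≤ (jap v)^4 * (1+‖v‖)^4 := by
            have := hwb v
            have h4 : (0:ℝ) ≤ (1+‖v‖)^4 := by positivity
            nlinarith
        _ ≤ 16777216 * W v := master hk v
    have hinv : ((1+‖v‖)^(4:ℕ))⁻¹ * (1+‖v‖)^(4:ℕ) = 1 := inv_mul_cancel₀ hp.ne'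
    show w v ^ 2 ≤ 16777216 * (1 + ‖v‖) ^ (-(4:ℝ)) * W v
    rw [hrw]
    nlinarith [mul_le_mul_of_nonneg_right hm (inv_nonneg.2 hp.le)]
  have hGint : Integrable G := integrable_G
  have hA0 : 0 ≤ ∫ v, G v := integral_nonneg hG0
  have hI0 : 0 ≤ ∫ v, W v * (h v)^2 :=
    integral_nonneg (fun v => mul_nonneg (Real.exp_nonneg _) (sq_nonneg _))
  refine le_sqrt_mul_sqrt hA0 hI0 ?_
  intro ε hε
  have step : ∫ v, 2 * ε * (w v * |h v|) ≤ ∫ v, G v + ε^2 * (W v * (h v)^2) := by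
    refine integral_mono_of_nonneg ?_ (hGint.add (hI.const_mul (ε^2))) ?_
    · refine Filter.Eventually.of_forall fun v => ?_
      have h1 := hw0 v
      have h2 := abs_nonneg (h v)
      positivity
    · refine Filter.Eventually.of_forall fun v => ?_
      have hWpos : 0 < W v := Real.exp_pos _
      have h1 : (2 * ε * (w v * |h v|))^2 ≤ (G v + ε^2 * (W v * (h v)^2))^2 := by
        have e0 : (2 * ε * (w v * |h v|))^2 = 4*ε^2*(w v)^2*(h v)^2 := by
          rw [show (2*ε*(w v*|h v|))^2 = 4*ε^2*(w v)^2*|h v|^2 from by ring, sq_abs]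
        nlinarith [e0, sq_nonneg (G v - ε^2 * (W v * (h v)^2)),
          mul_le_mul_of_nonneg_right (hGW v)
            (mul_nonneg (sq_nonneg ε) (sq_nonneg (h v)))]
      have hb : (0:ℝ) ≤ G v + ε^2 * (W v * (h v)^2) :=
        add_nonneg (hG0 v) (by positivity)
      exact le_of_pow_le_pow_left₀ two_ne_zero hb h1
  rw [integral_const_mul] at step
  rw [integral_add hGint (hI.const_mul (ε^2)),
    integral_const_mul (ε^2) (fun v => Real.exp (2 * jap v ^ k) * (h v)^2)] at step
  exact step

end Aux

section Main

open scoped RealInnerProductSpace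

local notation "E3" => EuclideanSpace ℝ (Fin 3)

private lemma abs_int_le {φ : E3 → ℝ} : |∫ v, φ v| ≤ ∫ v, |φ v| := by
  have h := norm_integral_le_integral_norm (μ := volume) φ
  simpa [Real.norm_eq_abs] using h

/-- Stability of the macroscopic fields. -/
theorem macroscopic_stability (k c₁ c₂ : ℝ) (hk1 : 1 < k) (hk2 : k < 2)
    (hc₂ : 0 < c₂) (hc₁₂ : c₂ ≤ c₁) :
    ∃ C > (0 : ℝ), ∀ (f g : EuclideanSpace ℝ (Fin 3) → ℝ)
      (ρf ρg Tf Tg : ℝ) (uf ug : EuclideanSpace ℝ (Fin 3)),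
      Measurable f → Measurable g → (∀ v, 0 ≤ f v) → (∀ v, 0 ≤ g v) →
      Integrable f → Integrable g →
      Integrable (fun v => f v • v) → Integrable (fun v => g v • v) →
      Integrable (fun v => ‖v‖ ^ 2 * f v) → Integrable (fun v => ‖v‖ ^ 2 * g v) →
      Integrable (fun v => Real.exp (2 * jap v ^ k) * (f v) ^ 2) →
      Integrable (fun v => Real.exp (2 * jap v ^ k) * (g v) ^ 2) →
      Integrable (fun v => Real.exp (2 * jap v ^ k) * (f v - g v) ^ 2) →
      ρf = ∫ v, f v → ρg = ∫ v, g v →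
      c₂ ≤ ρf → c₂ ≤ ρg →
      ρf • uf = ∫ v, f v • v → ρg • ug = ∫ v, g v • v →
      3 * ρf * Tf = ∫ v, ‖v - uf‖ ^ 2 * f v →
      3 * ρg * Tg = ∫ v, ‖v - ug‖ ^ 2 * g v →
      ρf ≤ c₁ → ρg ≤ c₁ → ‖uf‖ ≤ c₁ → ‖ug‖ ≤ c₁ → Tf ≤ c₁ → Tg ≤ c₁ →
      |ρf - ρg| + ‖uf - ug‖ + |Tf - Tg| ≤
        C * Real.sqrt (∫ v, Real.exp (2 * jap v ^ k) * (f v - g v) ^ 2) := by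
  have hk : (1:ℝ) ≤ k := hk1.le
  have hc₁ : 0 < c₁ := lt_of_lt_of_le hc₂ hc₁₂
  have hKN : 0 < 3*c₂^2 + 3*c₂*(1+c₁) + c₂*(1+c₁^2+3*c₁) + 2*c₁^2*(1+c₁) := by nlinarith
  have hK : 0 < (3*c₂^2 + 3*c₂*(1+c₁) + c₂*(1+c₁^2+3*c₁) + 2*c₁^2*(1+c₁)) / (3*c₂^2) :=
    div_pos hKN (by positivity)
  refine ⟨(Real.sqrt (∫ v : E3, (16777216:ℝ) * (1 + ‖v‖) ^ (-(4:ℝ))) + 1) *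
      ((3*c₂^2 + 3*c₂*(1+c₁) + c₂*(1+c₁^2+3*c₁) + 2*c₁^2*(1+c₁)) / (3*c₂^2)),
    mul_pos (by positivity) hK, ?_⟩
  intro f g ρf ρg Tf Tg uf ug hfm hgm hf0 hg0 hfi hgi hf1 hg1 hf2 hg2 hfe hge hhe
    hρf hρg hcf hcg hPf hPg hTf hTg hρfc hρgc hufc hugc hTfc hTgc
  have hρfpos : 0 < ρf := lt_of_lt_of_le hc₂ hcf
  have hρgpos : 0 < ρg := lt_of_lt_of_le hc₂ hcg
  obtain ⟨SA, hSAdef⟩ : ∃ x : ℝ,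
      Real.sqrt (∫ v : E3, (16777216:ℝ) * (1 + ‖v‖) ^ (-(4:ℝ))) = x := ⟨_, rfl⟩
  obtain ⟨D, hDdef⟩ : ∃ x : ℝ,
      Real.sqrt (∫ v, Real.exp (2 * jap v ^ k) * (f v - g v) ^ 2) = x := ⟨_, rfl⟩
  rw [hSAdef, hDdef]
  have hSA0 : 0 ≤ SA := hSAdef ▸ Real.sqrt_nonneg _
  have hD0 : 0 ≤ D := hDdef ▸ Real.sqrt_nonneg _
  -- the three key moment bounds
  have key1 : ∫ v, |f v - g v| ≤ SA * D := by
    have h := key_bound hk (fun v => f v - g v) (fun _ => 1)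
      (fun v => zero_le_one)
      (fun v => by
        have h4 := pow_le_pow_left₀ (by norm_num : (0:ℝ) ≤ 1) (jap_ge_one v) 4
        simpa using h4) hhe
    rw [hSAdef, hDdef] at h
    simpa using h
  have keyn : ∫ v, ‖v‖ * |f v - g v| ≤ SA * D := by
    have h := key_bound hk (fun v => f v - g v) (fun v => ‖v‖)
      (fun v => norm_nonneg v)
      (fun v => by
        have h2 := pow_le_pow_left₀ (norm_nonneg v) (jap_ge_norm v) 2
        have h4 := pow_le_pow_right₀ (jap_ge_one v) (by norm_num : 2 ≤ 4)
        exact h2.trans h4) hhe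
    rw [hSAdef, hDdef] at h
    simpa using h
  have keys : ∫ v, ‖v‖^2 * |f v - g v| ≤ SA * D := by
    have h := key_bound hk (fun v => f v - g v) (fun v => ‖v‖^2)
      (fun v => by positivity)
      (fun v => by
        have h4 := pow_le_pow_left₀ (norm_nonneg v) (jap_ge_norm v) 4
        calc (‖v‖^2)^2 = ‖v‖^4 := by ring
          _ ≤ (jap v)^4 := h4) hhe
    rw [hSAdef, hDdef] at h
    simpa using h
  -- bound on density difference
  have b1 : |ρf - ρg| ≤ SA * D := by
    have e : ρf - ρg = ∫ v, (f v - g v) := by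
      rw [hρf, hρg, ← integral_sub hfi hgi]
    rw [e]
    exact abs_int_le.trans key1
  -- bound on momentum difference
  have bP : ‖(∫ v, f v • v) - ∫ v, g v • v‖ ≤ SA * D := by
    have e : (∫ v, f v • v) - ∫ v, g v • v = ∫ v, (f v - g v) • v := by
      rw [← integral_sub hf1 hg1]
      congr 1
      funext v
      rw [sub_smul]
    rw [e]
    refine (norm_integral_le_integral_norm _).trans ?_
    refine le_trans (le_of_eq (integral_congr_ae (Filter.Eventually.of_forall fun v => ?_))) keyn
    show ‖(f v - g v) • v‖ = ‖v‖ * |f v - g v|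
    rw [norm_smul, Real.norm_eq_abs, mul_comm]
  -- bound on second-moment difference
  have bS : |(∫ v, ‖v‖^2 * f v) - ∫ v, ‖v‖^2 * g v| ≤ SA * D := by
    have e : (∫ v, ‖v‖^2 * f v) - ∫ v, ‖v‖^2 * g v = ∫ v, ‖v‖^2 * (f v - g v) := by
      rw [← integral_sub hf2 hg2]
      congr 1
      funext v
      ring
    rw [e]
    refine abs_int_le.trans (le_trans (le_of_eq ?_) keys)
    refine integral_congr_ae (Filter.Eventually.of_forall fun v => ?_)
    show |‖v‖^2 * (f v - g v)| = ‖v‖^2 * |f v - g v|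
    rw [abs_mul, abs_of_nonneg (by positivity : (0:ℝ) ≤ ‖v‖^2)]
  -- velocity difference bound
  have b2' : c₂ * ‖uf - ug‖ ≤ (1 + c₁) * (SA * D) := by
    have e : ρf • (uf - ug) = ((∫ v, f v • v) - ∫ v, g v • v) + (ρg - ρf) • ug := by
      rw [smul_sub, hPf, sub_smul, ← hPg]
      abel
    have h1 : ρf * ‖uf - ug‖ = ‖ρf • (uf - ug)‖ := by
      rw [norm_smul, Real.norm_eq_abs, abs_of_pos hρfpos]
    have h2 : ‖ρf • (uf - ug)‖ ≤ SA * D + |ρf - ρg| * ‖ug‖ := by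
      rw [e]
      refine (norm_add_le _ _).trans ?_
      have h3 : ‖(ρg - ρf) • ug‖ = |ρg - ρf| * ‖ug‖ := by
        rw [norm_smul, Real.norm_eq_abs]
      rw [h3, abs_sub_comm]
      exact add_le_add bP le_rfl
    have h4 : |ρf - ρg| * ‖ug‖ ≤ (SA * D) * c₁ :=
      mul_le_mul b1 hugc (norm_nonneg _) (mul_nonneg hSA0 hD0)
    have h5 : c₂ * ‖uf - ug‖ ≤ ρf * ‖uf - ug‖ :=
      mul_le_mul_of_nonneg_right hcf (norm_nonneg _)
    linarith
  -- temperature identities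
  have hTid : ∀ (p : E3 → ℝ) (ρ T : ℝ) (u : E3),
      Integrable p → Integrable (fun v => p v • v) → Integrable (fun v => ‖v‖^2 * p v) →
      ρ = ∫ v, p v → ρ • u = ∫ v, p v • v → 3*ρ*T = ∫ v, ‖v - u‖^2 * p v →
      3*ρ*T = (∫ v, ‖v‖^2 * p v) - ρ*‖u‖^2 := by
    intro p ρ T u hp hp1 hp2 hρ hu hT
    have hinner : Integrable (fun v => ⟪u, p v • v⟫) :=
      (innerSL ℝ u).integrable_comp hp1
    have hI2 : Integrable (fun v : E3 => 2 * ⟪u, p v • v⟫) := hinner.const_mul 2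
    have hI1 : Integrable (fun v : E3 => ‖v‖^2 * p v - 2 * ⟪u, p v • v⟫) := hp2.sub hI2
    have hI3 : Integrable (fun v : E3 => ‖u‖^2 * p v) := hp.const_mul _
    have e : (fun v : E3 => ‖v - u‖^2 * p v)
        = fun v => (‖v‖^2 * p v - 2 * ⟪u, p v • v⟫) + ‖u‖^2 * p v := by
      funext v
      rw [norm_sub_sq_real, real_inner_smul_right, real_inner_comm v u]
      ring
    rw [hT, e, integral_add hI1 hI3, integral_sub hp2 hI2,
      integral_const_mul 2 (fun v => ⟪u, p v • v⟫),
      integral_const_mul (‖u‖^2) p,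
      integral_inner hp1 u, ← hu, real_inner_smul_right, real_inner_self_eq_norm_sq, ← hρ]
    ring
  have e1 : 3*ρf*Tf = (∫ v, ‖v‖^2 * f v) - ρf*‖uf‖^2 :=
    hTid f ρf Tf uf hfi hf1 hf2 hρf hPf hTf
  have e2 : 3*ρg*Tg = (∫ v, ‖v‖^2 * g v) - ρg*‖ug‖^2 :=
    hTid g ρg Tg ug hgi hg1 hg2 hρg hPg hTg
  have key3 : 3*ρf*(Tf - Tg) = ((∫ v, ‖v‖^2 * f v) - ∫ v, ‖v‖^2 * g v)
      - ((ρf - ρg)*‖uf‖^2 + ρg*(‖uf‖^2 - ‖ug‖^2)) + 3*Tg*(ρg - ρf) := by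
    linear_combination e1 - e2
  have hTg0 : 0 ≤ Tg := by
    have h0 : 0 ≤ ∫ v, ‖v - ug‖^2 * g v :=
      integral_nonneg fun v => mul_nonneg (by positivity) (hg0 v)
    nlinarith [hTg, hρgpos]
  have hu2 : |‖uf‖^2 - ‖ug‖^2| ≤ 2*c₁*‖uf - ug‖ := by
    have h1 : |‖uf‖ - ‖ug‖| ≤ ‖uf - ug‖ := abs_norm_sub_norm_le uf ug
    have h2 : ‖uf‖^2 - ‖ug‖^2 = (‖uf‖ - ‖ug‖)*(‖uf‖ + ‖ug‖) := by ring
    rw [h2, abs_mul, abs_of_nonneg (by positivity : (0:ℝ) ≤ ‖uf‖ + ‖ug‖)]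
    calc |‖uf‖ - ‖ug‖| * (‖uf‖ + ‖ug‖) ≤ ‖uf - ug‖ * (2*c₁) :=
          mul_le_mul h1 (by linarith) (by positivity) (norm_nonneg _)
      _ = 2*c₁*‖uf - ug‖ := by ring
  -- bound on |3 ρf (Tf - Tg)|
  have habs3 : |3*ρf*(Tf - Tg)| ≤ SA*D + c₁^2*(SA*D) + 2*c₁^2*‖uf - ug‖ + 3*c₁*(SA*D) := by
    rw [key3]
    have t1 : |((∫ v, ‖v‖^2 * f v) - ∫ v, ‖v‖^2 * g v)
        - ((ρf - ρg)*‖uf‖^2 + ρg*(‖uf‖^2 - ‖ug‖^2)) + 3*Tg*(ρg - ρf)|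
        ≤ |(∫ v, ‖v‖^2 * f v) - ∫ v, ‖v‖^2 * g v|
          + |(ρf - ρg)*‖uf‖^2 + ρg*(‖uf‖^2 - ‖ug‖^2)| + |3*Tg*(ρg - ρf)| := by
      calc _ ≤ |((∫ v, ‖v‖^2 * f v) - ∫ v, ‖v‖^2 * g v)
            - ((ρf - ρg)*‖uf‖^2 + ρg*(‖uf‖^2 - ‖ug‖^2))| + |3*Tg*(ρg - ρf)| :=
            abs_add_le _ _
        _ ≤ _ := by
            have := abs_sub ((∫ v, ‖v‖^2 * f v) - ∫ v, ‖v‖^2 * g v)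
              ((ρf - ρg)*‖uf‖^2 + ρg*(‖uf‖^2 - ‖ug‖^2))
            linarith
    have t2 : |(ρf - ρg)*‖uf‖^2 + ρg*(‖uf‖^2 - ‖ug‖^2)|
        ≤ c₁^2*(SA*D) + 2*c₁^2*‖uf - ug‖ := by
      have s1 : |(ρf - ρg)*‖uf‖^2| ≤ (SA*D)*c₁^2 := by
        rw [abs_mul, abs_of_nonneg (by positivity : (0:ℝ) ≤ ‖uf‖^2)]
        refine mul_le_mul b1 ?_ (by positivity) (mul_nonneg hSA0 hD0)
        nlinarith [norm_nonneg uf]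
      have s2 : |ρg*(‖uf‖^2 - ‖ug‖^2)| ≤ c₁*(2*c₁*‖uf - ug‖) := by
        rw [abs_mul, abs_of_pos hρgpos]
        refine mul_le_mul hρgc hu2 (abs_nonneg _) hc₁.le
      calc |(ρf - ρg)*‖uf‖^2 + ρg*(‖uf‖^2 - ‖ug‖^2)|
          ≤ |(ρf - ρg)*‖uf‖^2| + |ρg*(‖uf‖^2 - ‖ug‖^2)| := abs_add_le _ _
        _ ≤ c₁^2*(SA*D) + 2*c₁^2*‖uf - ug‖ := by linarith
    have t3 : |3*Tg*(ρg - ρf)| ≤ 3*c₁*(SA*D) := by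
      rw [abs_mul, abs_of_nonneg (by linarith : (0:ℝ) ≤ 3*Tg), abs_sub_comm]
      have : 3*Tg ≤ 3*c₁ := by linarith
      refine mul_le_mul this b1 (abs_nonneg _) (by positivity)
    have t4 := bS
    linarith [t1, t2, t3, t4]
  -- temperature difference bound, scaled
  have b3'' : 3*c₂^2*|Tf - Tg| ≤ c₂*(SA*D) + c₂*c₁^2*(SA*D)
      + 2*c₁^2*((1+c₁)*(SA*D)) + 3*c₁*c₂*(SA*D) := by
    have h6 : |3*ρf*(Tf - Tg)| = 3*ρf*|Tf - Tg| := by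
      rw [abs_mul, abs_of_pos (by linarith : (0:ℝ) < 3*ρf)]
    rw [h6] at habs3
    have h7 : 3*c₂^2*|Tf - Tg| ≤ c₂*(3*ρf*|Tf - Tg|) := by
      have hp : (0:ℝ) ≤ 3*c₂*(ρf - c₂)*|Tf - Tg| :=
        mul_nonneg (mul_nonneg (by linarith) (by linarith)) (abs_nonneg _)
      linarith [hp]
    have h8 := mul_le_mul_of_nonneg_left habs3 hc₂.le
    have h9 := mul_le_mul_of_nonneg_left b2' (by positivity : (0:ℝ) ≤ 2*c₁^2)
    linarith [h7, h8, h9]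
  -- final assembly
  have main : 3*c₂^2*(|ρf - ρg| + ‖uf - ug‖ + |Tf - Tg|)
      ≤ (3*c₂^2 + 3*c₂*(1+c₁) + c₂*(1+c₁^2+3*c₁) + 2*c₁^2*(1+c₁))*(SA*D) := by
    have m1 := mul_le_mul_of_nonneg_left b1 (by positivity : (0:ℝ) ≤ 3*c₂^2)
    have m2 := mul_le_mul_of_nonneg_left b2' (by positivity : (0:ℝ) ≤ 3*c₂)
    linarith [m1, m2, b3'']

  have hsum : |ρf - ρg| + ‖uf - ug‖ + |Tf - Tg|
      ≤ ((3*c₂^2 + 3*c₂*(1+c₁) + c₂*(1+c₁^2+3*c₁) + 2*c₁^2*(1+c₁)) / (3*c₂^2))*(SA*D) := by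
    rw [div_mul_eq_mul_div, le_div_iff₀ (by positivity : (0:ℝ) < 3*c₂^2)]
    linarith [main]
  have hfin : ((3*c₂^2 + 3*c₂*(1+c₁) + c₂*(1+c₁^2+3*c₁) + 2*c₁^2*(1+c₁)) / (3*c₂^2))*(SA*D)
      ≤ (SA + 1) * ((3*c₂^2 + 3*c₂*(1+c₁) + c₂*(1+c₁^2+3*c₁) + 2*c₁^2*(1+c₁)) / (3*c₂^2)) * D := by
    have expand : (SA + 1) * ((3*c₂^2 + 3*c₂*(1+c₁) + c₂*(1+c₁^2+3*c₁) + 2*c₁^2*(1+c₁)) / (3*c₂^2)) * D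
        = ((3*c₂^2 + 3*c₂*(1+c₁) + c₂*(1+c₁^2+3*c₁) + 2*c₁^2*(1+c₁)) / (3*c₂^2))*(SA*D)
        + ((3*c₂^2 + 3*c₂*(1+c₁) + c₂*(1+c₁^2+3*c₁) + 2*c₁^2*(1+c₁)) / (3*c₂^2))*D := by
      ring
    rw [expand]
    linarith [mul_nonneg hK.le hD0]
  exact hsum.trans hfin

end Main
end

section
/- Let ρ, u, T and ρ', u', T' satisfy C₂ ≤ ρ, ρ', T, T' and ρ + |u| + T ≤ C₁, ρ' + |u'| + T' ≤ C₁ for constants 0 < C₂ ≤ C₁. Define Maxwellians M(v) = ρ(2πT)^{−3/2} e^{−|v−u|²/(2T)} and M'(v) = ρ'(2πT')^{−3/2} e^{−|v−u'|²/(2T')}. Then there exists C depending only on C₁, C₂ such that for all v ∈ R³: |M(v) − M'(v)| ≤ C ( (2πT)^{−3/2} e^{−|v−u|²/(4T)} + (2πT')^{−3/2} e^{−|v−u'|²/(4T')} ) (1 + |v−u| + |v−u'| + |v−u|²) (|ρ−ρ'| + |u−u'| + |T−T'|). -/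
open Real


lemma exp_diff_aux (x y : ℝ) (h : x ≤ y) :
    Real.exp y - Real.exp x ≤ (Real.exp x + Real.exp y) * (y - x) := by
  have h1 := Real.add_one_le_exp (-(y - x))
  have h2 : Real.exp (-(y - x)) * Real.exp (y - x) = 1 := by
    rw [← Real.exp_add]; simp
  have h3 : Real.exp y = Real.exp x * Real.exp (y - x) := by
    rw [← Real.exp_add]; ring_nf
  have h4 : Real.exp (y - x) - 1 ≤ (y - x) * Real.exp (y - x) := by
    nlinarith [mul_le_mul_of_nonneg_right h1 (Real.exp_pos (y - x)).le, h2]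
  nlinarith [mul_le_mul_of_nonneg_left h4 (Real.exp_pos x).le, Real.exp_pos x,
    Real.exp_pos (y - x), sub_nonneg.2 h, mul_nonneg (sub_nonneg.2 h) (Real.exp_pos x).le]

lemma exp_diff_le (x y : ℝ) :
    |Real.exp x - Real.exp y| ≤ (Real.exp x + Real.exp y) * |x - y| := by
  rcases le_total x y with h | h
  · rw [abs_sub_comm, abs_of_nonneg (sub_nonneg.2 (Real.exp_le_exp.2 h)),
      abs_sub_comm, abs_of_nonneg (sub_nonneg.2 h)]
    exact exp_diff_aux x y h
  · rw [abs_of_nonneg (sub_nonneg.2 (Real.exp_le_exp.2 h)),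
      abs_of_nonneg (sub_nonneg.2 h)]
    have := exp_diff_aux y x h
    nlinarith [this]

lemma rpow_neg_three_halves (x : ℝ) (hx : 0 < x) :
    x ^ (-(3 : ℝ) / 2) = (x * Real.sqrt x)⁻¹ := by
  rw [show (-(3 : ℝ) / 2) = -(3 / 2) by norm_num, Real.rpow_neg hx.le]
  congr 1
  rw [show ((3 : ℝ) / 2) = 1 + 1 / 2 by norm_num, Real.rpow_add hx, Real.rpow_one,
    ← Real.sqrt_eq_rpow]

lemma inv_mul_sqrt_anti {w x : ℝ} (hw : 0 < w) (h : w ≤ x) :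
    (x * Real.sqrt x)⁻¹ ≤ (w * Real.sqrt w)⁻¹ := by
  have hx : 0 < x := lt_of_lt_of_le hw h
  apply inv_anti₀ (by positivity)
  exact mul_le_mul h (Real.sqrt_le_sqrt h) (Real.sqrt_nonneg w) hx.le

lemma cube_aux (a₁ a₂ x y : ℝ) (h0 : 0 < a₁) (hx1 : a₁ ≤ x) (hx2 : x ≤ a₂)
    (hy1 : a₁ ≤ y) (hy2 : y ≤ a₂) (hyx : y ≤ x) :
    (y * Real.sqrt y)⁻¹ - (x * Real.sqrt x)⁻¹ ≤
      (Real.sqrt a₂ + a₂ / (2 * Real.sqrt a₁)) / a₁ ^ 3 * (x - y) := by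
  have hy0 : 0 < y := lt_of_lt_of_le h0 hy1
  have hx0 : 0 < x := lt_of_lt_of_le h0 hx1
  have ha2 : 0 < a₂ := lt_of_lt_of_le h0 (hx1.trans hx2)
  have hp : 0 < Real.sqrt a₁ := Real.sqrt_pos.2 h0
  have hs := Real.sq_sqrt hx0.le
  have ht := Real.sq_sqrt hy0.le
  have hq2 := Real.sq_sqrt ha2.le
  have hp2 := Real.sq_sqrt h0.le
  have hts : Real.sqrt y ≤ Real.sqrt x := Real.sqrt_le_sqrt hyx
  have hsq : Real.sqrt x ≤ Real.sqrt a₂ := Real.sqrt_le_sqrt hx2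
  have htq : Real.sqrt y ≤ Real.sqrt a₂ := Real.sqrt_le_sqrt hy2
  have hpt : Real.sqrt a₁ ≤ Real.sqrt y := Real.sqrt_le_sqrt hy1
  have hps : Real.sqrt a₁ ≤ Real.sqrt x := Real.sqrt_le_sqrt hx1
  have hxs : 0 < x * Real.sqrt x := by positivity
  have hyt : 0 < y * Real.sqrt y := by positivity
  have key : (y * Real.sqrt y)⁻¹ - (x * Real.sqrt x)⁻¹ =
      (x * Real.sqrt x - y * Real.sqrt y) / ((x * Real.sqrt x) * (y * Real.sqrt y)) := by
    rw [inv_sub_inv hyt.ne' hxs.ne', mul_comm (y * Real.sqrt y) (x * Real.sqrt x)]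
  have h2p : (0 : ℝ) < 2 * Real.sqrt a₁ := by positivity
  have hnum2 : 2 * Real.sqrt a₁ * (x * Real.sqrt x - y * Real.sqrt y) ≤
      (2 * Real.sqrt a₁ * Real.sqrt a₂ + a₂) * (x - y) := by
    set s := Real.sqrt x with hsd
    set t := Real.sqrt y with htd
    set p := Real.sqrt a₁ with hpd
    set q := Real.sqrt a₂ with hqd
    rw [← hs, ← ht, ← hq2]
    nlinarith [mul_nonneg (mul_nonneg (sub_nonneg.2 hts) hp.le)
        (mul_nonneg (Real.sqrt_nonneg x) (sub_nonneg.2 hsq)),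
      mul_nonneg (mul_nonneg (sub_nonneg.2 hts) hp.le)
        (mul_nonneg (Real.sqrt_nonneg y) (sub_nonneg.2 htq)),
      mul_nonneg (mul_nonneg (sub_nonneg.2 hts) (sq_nonneg (Real.sqrt a₂)))
        (by linarith : (0:ℝ) ≤ Real.sqrt x + Real.sqrt y - 2 * Real.sqrt a₁),
      mul_nonneg (mul_nonneg (sub_nonneg.2 hts) hp.le)
        (mul_nonneg (sub_nonneg.2 hsq) (Real.sqrt_nonneg a₂)),
      mul_nonneg (mul_nonneg (sub_nonneg.2 hts) hp.le)
        (mul_nonneg (Real.sqrt_nonneg x) (sub_nonneg.2 htq))]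
  have hnum : x * Real.sqrt x - y * Real.sqrt y ≤
      (Real.sqrt a₂ + a₂ / (2 * Real.sqrt a₁)) * (x - y) := by
    calc x * Real.sqrt x - y * Real.sqrt y
        ≤ (2 * Real.sqrt a₁ * Real.sqrt a₂ + a₂) * (x - y) / (2 * Real.sqrt a₁) := by
          rw [le_div_iff₀ h2p]; linarith [hnum2]
      _ = (Real.sqrt a₂ + a₂ / (2 * Real.sqrt a₁)) * (x - y) := by
          field_simp

  have hden : a₁ ^ 3 ≤ (x * Real.sqrt x) * (y * Real.sqrt y) := by
    have h1 : a₁ * Real.sqrt a₁ ≤ x * Real.sqrt x :=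
      mul_le_mul hx1 hps (Real.sqrt_nonneg a₁) hx0.le
    have h2 : a₁ * Real.sqrt a₁ ≤ y * Real.sqrt y :=
      mul_le_mul hy1 hpt (Real.sqrt_nonneg a₁) hy0.le
    calc a₁ ^ 3 = (a₁ * Real.sqrt a₁) * (a₁ * Real.sqrt a₁) := by
          rw [show (a₁ * Real.sqrt a₁) * (a₁ * Real.sqrt a₁) = a₁ ^ 2 * Real.sqrt a₁ ^ 2 by ring,
            hp2]; ring
      _ ≤ (x * Real.sqrt x) * (y * Real.sqrt y) :=
          mul_le_mul h1 h2 (by positivity) hxs.le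
  rw [key]
  calc (x * Real.sqrt x - y * Real.sqrt y) / ((x * Real.sqrt x) * (y * Real.sqrt y))
      ≤ (Real.sqrt a₂ + a₂ / (2 * Real.sqrt a₁)) * (x - y) / a₁ ^ 3 :=
        div_le_div₀ (mul_nonneg (by positivity) (sub_nonneg.2 hyx)) hnum (by positivity) hden
    _ = (Real.sqrt a₂ + a₂ / (2 * Real.sqrt a₁)) / a₁ ^ 3 * (x - y) := by ring

lemma cube_lip (a₁ a₂ x y : ℝ) (h0 : 0 < a₁) (hx1 : a₁ ≤ x) (hx2 : x ≤ a₂)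
    (hy1 : a₁ ≤ y) (hy2 : y ≤ a₂) :
    |(x * Real.sqrt x)⁻¹ - (y * Real.sqrt y)⁻¹| ≤
      (Real.sqrt a₂ + a₂ / (2 * Real.sqrt a₁)) / a₁ ^ 3 * |x - y| := by
  have hx0 : 0 < x := lt_of_lt_of_le h0 hx1
  have hy0 : 0 < y := lt_of_lt_of_le h0 hy1
  have hxs : 0 < x * Real.sqrt x := by positivity
  have hyt : 0 < y * Real.sqrt y := by positivity
  rcases le_total y x with h | h
  · rw [abs_sub_comm, abs_of_nonneg (sub_nonneg.2
      (inv_anti₀ hyt (mul_le_mul h (Real.sqrt_le_sqrt h) (Real.sqrt_nonneg y) hx0.le))),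
      abs_of_nonneg (sub_nonneg.2 h)]
    exact cube_aux a₁ a₂ x y h0 hx1 hx2 hy1 hy2 h
  · rw [abs_of_nonneg (sub_nonneg.2
      (inv_anti₀ hxs (mul_le_mul h (Real.sqrt_le_sqrt h) (Real.sqrt_nonneg x) hy0.le))),
      abs_sub_comm, abs_of_nonneg (sub_nonneg.2 h)]
    exact cube_aux a₁ a₂ y x h0 hy1 hy2 hx1 hx2 h

lemma exp_half_bound (t x : ℝ) (ht : 0 < t) :
    Real.exp (-x ^ 2 / (2 * t)) ≤ Real.exp (-x ^ 2 / (4 * t)) := by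
  apply Real.exp_le_exp.2
  rw [div_le_div_iff₀ (by linarith) (by linarith)]
  nlinarith [sq_nonneg x]

lemma sq_bound (C₁ r r' d : ℝ) (h1 : r' ≤ r + d) (h2 : d ≤ 2 * C₁)
    (hr0 : 0 ≤ r) (hr'0 : 0 ≤ r') (hd0 : 0 ≤ d) :
    r' ^ 2 ≤ (2 + 8 * C₁ ^ 2) * (1 + r + r' + r ^ 2) := by
  nlinarith [mul_le_mul h1 h1 hr'0 (by linarith), mul_le_mul h2 h2 hd0 (by linarith),
    sq_nonneg (r - d), mul_nonneg hr0 hd0, sq_nonneg r, sq_nonneg d]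


set_option maxHeartbeats 1000000 in
/-- Pointwise Lipschitz estimate of the Maxwellian in its macroscopic parameters:
if `C₂ ≤ ρ, ρ', T, T'` and `ρ + |u| + T ≤ C₁`, `ρ' + |u'| + T' ≤ C₁`, then with
`M(v) = ρ(2πT)^{−3/2} e^{−|v−u|²/(2T)}` and similarly `M'`, for all `v ∈ ℝ³`,
`|M(v) − M'(v)| ≤ C ((2πT)^{−3/2}e^{−|v−u|²/(4T)} + (2πT')^{−3/2}e^{−|v−u'|²/(4T')})
  (1 + |v−u| + |v−u'| + |v−u|²)(|ρ−ρ'| + |u−u'| + |T−T'|)`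
for some `C = C(C₁,C₂) > 0`. -/
theorem maxwellian_lipschitz (C₁ C₂ : ℝ) (hC₂ : 0 < C₂) (hC : C₂ ≤ C₁) :
    ∃ C > (0 : ℝ), ∀ (ρ T ρ' T' : ℝ) (u u' : EuclideanSpace ℝ (Fin 3)),
      C₂ ≤ ρ → C₂ ≤ ρ' → C₂ ≤ T → C₂ ≤ T' →
      ρ + ‖u‖ + T ≤ C₁ → ρ' + ‖u'‖ + T' ≤ C₁ →
      ∀ v : EuclideanSpace ℝ (Fin 3),
        |ρ * (2 * π * T) ^ (-(3 : ℝ) / 2) * Real.exp (-‖v - u‖ ^ 2 / (2 * T))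
          - ρ' * (2 * π * T') ^ (-(3 : ℝ) / 2) * Real.exp (-‖v - u'‖ ^ 2 / (2 * T'))| ≤
        C * ((2 * π * T) ^ (-(3 : ℝ) / 2) * Real.exp (-‖v - u‖ ^ 2 / (4 * T))
              + (2 * π * T') ^ (-(3 : ℝ) / 2) * Real.exp (-‖v - u'‖ ^ 2 / (4 * T')))
          * (1 + ‖v - u‖ + ‖v - u'‖ + ‖v - u‖ ^ 2)
          * (|ρ - ρ'| + ‖u - u'‖ + |T - T'|) := by
  have hπ := Real.pi_pos
  have hC₁ : 0 < C₁ := lt_of_lt_of_le hC₂ hC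
  refine ⟨(((2 * π * C₂) * Real.sqrt (2 * π * C₂))⁻¹
      + C₁ * ((Real.sqrt (2 * π * C₁) + (2 * π * C₁) / (2 * Real.sqrt (2 * π * C₂)))
              / (2 * π * C₂) ^ 3 * (2 * π))
      + C₁ * ((2 * π * C₂) * Real.sqrt (2 * π * C₂))⁻¹
          * (1 / (2 * C₂) + (2 + 8 * C₁ ^ 2) / (2 * C₂ ^ 2)))
      / ((2 * π * C₁) * Real.sqrt (2 * π * C₁))⁻¹, by positivity, ?_⟩
  intro ρ T ρ' T' u u' hρ hρ' hT hT' hb hb' v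
  set c₀ := ((2 * π * C₁) * Real.sqrt (2 * π * C₁))⁻¹ with hc₀d
  set c₁ := ((2 * π * C₂) * Real.sqrt (2 * π * C₂))⁻¹ with hc₁d
  set L := (Real.sqrt (2 * π * C₁) + (2 * π * C₁) / (2 * Real.sqrt (2 * π * C₂)))
      / (2 * π * C₂) ^ 3 * (2 * π) with hLd
  set K₂ := 1 / (2 * C₂) + (2 + 8 * C₁ ^ 2) / (2 * C₂ ^ 2) with hK₂d
  set r := ‖v - u‖ with hrd
  set r' := ‖v - u'‖ with hr'd
  set d := ‖u - u'‖ with hdd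
  set P := (2 * π * T) ^ (-(3 : ℝ) / 2) with hPd
  set P' := (2 * π * T') ^ (-(3 : ℝ) / 2) with hP'd
  set E := Real.exp (-r ^ 2 / (2 * T)) with hEd
  set E' := Real.exp (-r' ^ 2 / (2 * T')) with hE'd
  set H := Real.exp (-r ^ 2 / (4 * T)) with hHd
  set H' := Real.exp (-r' ^ 2 / (4 * T')) with hH'd
  set Q := 1 + r + r' + r ^ 2 with hQd
  set D := |ρ - ρ'| + d + |T - T'| with hDd
  -- basic positivity and bounds
  have hT0 : 0 < T := lt_of_lt_of_le hC₂ hT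
  have hT0' : 0 < T' := lt_of_lt_of_le hC₂ hT'
  have hρ0 : 0 < ρ := lt_of_lt_of_le hC₂ hρ
  have hρ0' : 0 < ρ' := lt_of_lt_of_le hC₂ hρ'
  have hr0 : 0 ≤ r := by rw [hrd]; exact norm_nonneg _
  have hr'0 : 0 ≤ r' := by rw [hr'd]; exact norm_nonneg _
  have hd0 : 0 ≤ d := by rw [hdd]; exact norm_nonneg _
  have hu0 : (0:ℝ) ≤ ‖u‖ := norm_nonneg _
  have hu0' : (0:ℝ) ≤ ‖u'‖ := norm_nonneg _
  have hT₁ : T ≤ C₁ := by linarith only [hb, hρ0, hu0, hρ, hC₂]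
  have hT₁' : T' ≤ C₁ := by linarith only [hb', hρ0', hu0', hρ', hC₂]
  have hρ₁ : ρ ≤ C₁ := by linarith only [hb, hT0, hu0]
  have hρ₁' : ρ' ≤ C₁ := by linarith only [hb', hT0', hu0']
  have ha₁0 : (0:ℝ) < 2 * π * C₂ := by positivity
  have h2π : (0:ℝ) ≤ 2 * π := by positivity
  have hx1 : 2 * π * C₂ ≤ 2 * π * T := mul_le_mul_of_nonneg_left hT h2π
  have hx2 : 2 * π * T ≤ 2 * π * C₁ := mul_le_mul_of_nonneg_left hT₁ h2π
  have hy1 : 2 * π * C₂ ≤ 2 * π * T' := mul_le_mul_of_nonneg_left hT' h2π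
  have hy2 : 2 * π * T' ≤ 2 * π * C₁ := mul_le_mul_of_nonneg_left hT₁' h2π
  have hc₀ : 0 < c₀ := by rw [hc₀d]; positivity
  have hc₁ : 0 < c₁ := by rw [hc₁d]; positivity
  have hL : 0 < L := by rw [hLd]; positivity
  have hK₂ : 0 < K₂ := by rw [hK₂d]; positivity
  have hPd2 : P = ((2 * π * T) * Real.sqrt (2 * π * T))⁻¹ := by
    rw [hPd]; exact rpow_neg_three_halves _ (lt_of_lt_of_le ha₁0 hx1)
  have hP'd2 : P' = ((2 * π * T') * Real.sqrt (2 * π * T'))⁻¹ := by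
    rw [hP'd]; exact rpow_neg_three_halves _ (lt_of_lt_of_le ha₁0 hy1)
  have hPub : P ≤ c₁ := by
    rw [hPd2, hc₁d]; exact inv_mul_sqrt_anti ha₁0 hx1
  have hP'ub : P' ≤ c₁ := by
    rw [hP'd2, hc₁d]; exact inv_mul_sqrt_anti ha₁0 hy1
  have hPlb : c₀ ≤ P := by
    rw [hPd2, hc₀d]; exact inv_mul_sqrt_anti (lt_of_lt_of_le ha₁0 hx1) hx2
  have hP'lb : c₀ ≤ P' := by
    rw [hP'd2, hc₀d]; exact inv_mul_sqrt_anti (lt_of_lt_of_le ha₁0 hy1) hy2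
  have hP0 : 0 < P := lt_of_lt_of_le hc₀ hPlb
  have hP0' : 0 < P' := lt_of_lt_of_le hc₀ hP'lb
  -- Lipschitz bound for P
  have hPP' : |P - P'| ≤ L * |T - T'| := by
    rw [hPd2, hP'd2]
    calc |((2 * π * T) * Real.sqrt (2 * π * T))⁻¹ - ((2 * π * T') * Real.sqrt (2 * π * T'))⁻¹|
        ≤ (Real.sqrt (2 * π * C₁) + (2 * π * C₁) / (2 * Real.sqrt (2 * π * C₂)))
            / (2 * π * C₂) ^ 3 * |2 * π * T - 2 * π * T'| :=
          cube_lip _ _ _ _ ha₁0 hx1 hx2 hy1 hy2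
      _ = L * |T - T'| := by
          rw [hLd, show (2 * π * T - 2 * π * T') = 2 * π * (T - T') by ring, abs_mul,
            abs_of_pos (by positivity : (0:ℝ) < 2 * π)]
          ring
  -- exponential bounds
  have hE0 : 0 < E := by rw [hEd]; exact Real.exp_pos _
  have hE0' : 0 < E' := by rw [hE'd]; exact Real.exp_pos _
  have hH0 : 0 < H := by rw [hHd]; exact Real.exp_pos _
  have hH0' : 0 < H' := by rw [hH'd]; exact Real.exp_pos _
  have hEH : E ≤ H := by rw [hEd, hHd]; exact exp_half_bound T r hT0
  have hE'H' : E' ≤ H' := by rw [hE'd, hH'd]; exact exp_half_bound T' r' hT0'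
  -- distance facts
  have hrr' : |r - r'| ≤ d := by
    rw [hrd, hr'd, hdd]
    calc |‖v - u‖ - ‖v - u'‖| ≤ ‖(v - u) - (v - u')‖ := abs_norm_sub_norm_le _ _
      _ = ‖u' - u‖ := by rw [show (v - u) - (v - u') = u' - u by abel]
      _ = ‖u - u'‖ := norm_sub_rev _ _
  have hr'r : r' ≤ r + d := by
    have h := abs_le.1 hrr'
    linarith only [h.1]
  have hd2C₁ : d ≤ 2 * C₁ := by
    rw [hdd]
    calc ‖u - u'‖ ≤ ‖u‖ + ‖u'‖ := norm_sub_le _ _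
      _ ≤ 2 * C₁ := by linarith only [hb, hb', hρ0, hρ0', hT0, hT0']
  have hQ1 : 1 ≤ Q := by
    rw [hQd]; linarith only [hr0, hr'0, sq_nonneg r]
  have hQ0 : 0 ≤ Q := by linarith only [hQ1]
  have hD0 : 0 ≤ D := by
    rw [hDd]; linarith only [abs_nonneg (ρ - ρ'), abs_nonneg (T - T'), hd0]
  have hdD : d ≤ D := by
    rw [hDd]; linarith only [abs_nonneg (ρ - ρ'), abs_nonneg (T - T')]
  have hTD : |T - T'| ≤ D := by
    rw [hDd]; linarith only [abs_nonneg (ρ - ρ'), hd0]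
  have hρD : |ρ - ρ'| ≤ D := by
    rw [hDd]; linarith only [abs_nonneg (T - T'), hd0]
  have hrQ : r + r' ≤ Q := by
    rw [hQd]; linarith only [sq_nonneg r]
  -- bound on the difference of exponents
  have habs : |(-r ^ 2 / (2 * T)) - (-r' ^ 2 / (2 * T'))| ≤ K₂ * Q * D := by
    have hsplit : (-r ^ 2 / (2 * T)) - (-r' ^ 2 / (2 * T'))
        = (r' ^ 2 - r ^ 2) / (2 * T) + r' ^ 2 * (T - T') / (2 * T * T') := by
      field_simp
      ring
    have hnum1 : |r' ^ 2 - r ^ 2| ≤ d * (r + r') := by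
      rw [show r' ^ 2 - r ^ 2 = (r' - r) * (r' + r) by ring, abs_mul,
        abs_of_nonneg (by linarith only [hr0, hr'0] : (0:ℝ) ≤ r' + r)]
      have h1 : |r' - r| ≤ d := by rw [abs_sub_comm]; exact hrr'
      calc |r' - r| * (r' + r) ≤ d * (r' + r) :=
            mul_le_mul_of_nonneg_right h1 (by linarith only [hr0, hr'0])
        _ = d * (r + r') := by ring
    have ht1 : |(r' ^ 2 - r ^ 2) / (2 * T)| ≤ d * (r + r') / (2 * C₂) := by
      rw [abs_div, abs_of_pos (by linarith only [hT0] : (0:ℝ) < 2 * T)]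
      exact div_le_div₀ (by positivity) hnum1 (by positivity)
        (by linarith only [hT])
    have hr'sq : r' ^ 2 ≤ (2 + 8 * C₁ ^ 2) * Q := by
      rw [hQd]; exact sq_bound C₁ r r' d hr'r hd2C₁ hr0 hr'0 hd0
    have hTT' : 2 * C₂ ^ 2 ≤ 2 * T * T' := by
      have h := mul_le_mul hT hT' hC₂.le hT0.le
      linarith only [h]
    have ht2 : |r' ^ 2 * (T - T') / (2 * T * T')|
        ≤ (2 + 8 * C₁ ^ 2) * Q * |T - T'| / (2 * C₂ ^ 2) := by
      rw [abs_div, abs_mul, abs_of_nonneg (sq_nonneg r'),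
        abs_of_pos (by positivity : (0:ℝ) < 2 * T * T')]
      exact div_le_div₀ (by positivity)
        (mul_le_mul_of_nonneg_right hr'sq (abs_nonneg _)) (by positivity) hTT'
    have e1 : d * (r + r') ≤ D * Q :=
      mul_le_mul hdD hrQ (by linarith only [hr0, hr'0]) hD0
    have e2 : Q * |T - T'| ≤ Q * D := mul_le_mul_of_nonneg_left hTD hQ0
    calc |(-r ^ 2 / (2 * T)) - (-r' ^ 2 / (2 * T'))|
        = |(r' ^ 2 - r ^ 2) / (2 * T) + r' ^ 2 * (T - T') / (2 * T * T')| := by rw [hsplit]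
      _ ≤ |(r' ^ 2 - r ^ 2) / (2 * T)| + |r' ^ 2 * (T - T') / (2 * T * T')| := abs_add_le _ _
      _ ≤ d * (r + r') / (2 * C₂) + (2 + 8 * C₁ ^ 2) * Q * |T - T'| / (2 * C₂ ^ 2) := by
          linarith only [ht1, ht2]
      _ ≤ D * Q / (2 * C₂) + (2 + 8 * C₁ ^ 2) * Q * D / (2 * C₂ ^ 2) := by
          have f1 : d * (r + r') / (2 * C₂) ≤ D * Q / (2 * C₂) :=
            div_le_div_of_nonneg_right e1 (by positivity)
          have f2 : (2 + 8 * C₁ ^ 2) * Q * |T - T'| / (2 * C₂ ^ 2)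
              ≤ (2 + 8 * C₁ ^ 2) * Q * D / (2 * C₂ ^ 2) := by
            apply div_le_div_of_nonneg_right _ (by positivity)
            linarith only [mul_le_mul_of_nonneg_left e2
              (by positivity : (0:ℝ) ≤ 2 + 8 * C₁ ^ 2)]
          linarith only [f1, f2]
      _ = K₂ * Q * D := by rw [hK₂d]; ring
  -- exponential difference bound
  have hED : |E - E'| ≤ (H + H') * (K₂ * Q * D) := by
    calc |E - E'| ≤ (E + E') * |(-r ^ 2 / (2 * T)) - (-r' ^ 2 / (2 * T'))| := by
          rw [hEd, hE'd]; exact exp_diff_le _ _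
      _ ≤ (H + H') * (K₂ * Q * D) :=
          mul_le_mul (by linarith only [hEH, hE'H']) habs (abs_nonneg _)
            (by linarith only [hH0, hH0'])
  -- bound on the amplitude difference
  have hA : |ρ * P - ρ' * P'| ≤ (c₁ + C₁ * L) * D := by
    calc |ρ * P - ρ' * P'| = |(ρ - ρ') * P + ρ' * (P - P')| := by
          rw [show ρ * P - ρ' * P' = (ρ - ρ') * P + ρ' * (P - P') by ring]
      _ ≤ |(ρ - ρ') * P| + |ρ' * (P - P')| := abs_add_le _ _
      _ = |ρ - ρ'| * P + ρ' * |P - P'| := by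
          rw [abs_mul, abs_mul, abs_of_pos hP0, abs_of_pos hρ0']
      _ ≤ D * c₁ + C₁ * (L * |T - T'|) := by
          have g1 : |ρ - ρ'| * P ≤ D * c₁ := mul_le_mul hρD hPub hP0.le hD0
          have g2 : ρ' * |P - P'| ≤ C₁ * (L * |T - T'|) :=
            mul_le_mul hρ₁' hPP' (abs_nonneg _) hC₁.le
          linarith only [g1, g2]
      _ ≤ (c₁ + C₁ * L) * D := by
          linarith only [mul_le_mul_of_nonneg_left hTD (mul_pos hC₁ hL).le]
  have hAmp : ρ' * P' ≤ C₁ * c₁ := mul_le_mul hρ₁' hP'ub hP0'.le hC₁.le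
  -- assembly
  have hXlb : c₀ * (H + H') ≤ P * H + P' * H' := by
    linarith only [mul_le_mul_of_nonneg_right hPlb hH0.le,
      mul_le_mul_of_nonneg_right hP'lb hH0'.le]
  have hHle : H ≤ (H + H') * Q := by
    linarith only [mul_nonneg (by linarith only [hH0, hH0'] : (0:ℝ) ≤ H + H')
      (by linarith only [hQ1] : (0:ℝ) ≤ Q - 1), hH0'.le]
  have hcL0 : (0:ℝ) ≤ c₁ + C₁ * L := by positivity
  have main1 : |ρ * P * E - ρ' * P' * E'| ≤
      (c₁ + C₁ * L) * D * H + C₁ * c₁ * ((H + H') * (K₂ * Q * D)) := by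
    calc |ρ * P * E - ρ' * P' * E'|
        = |(ρ * P - ρ' * P') * E + (ρ' * P') * (E - E')| := by
          rw [show ρ * P * E - ρ' * P' * E'
            = (ρ * P - ρ' * P') * E + (ρ' * P') * (E - E') by ring]
      _ ≤ |(ρ * P - ρ' * P') * E| + |(ρ' * P') * (E - E')| := abs_add_le _ _
      _ = |ρ * P - ρ' * P'| * E + (ρ' * P') * |E - E'| := by
          rw [abs_mul, abs_mul, abs_of_pos hE0, abs_of_pos (mul_pos hρ0' hP0')]
      _ ≤ ((c₁ + C₁ * L) * D) * H + (C₁ * c₁) * ((H + H') * (K₂ * Q * D)) := by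
          have g1 : |ρ * P - ρ' * P'| * E ≤ ((c₁ + C₁ * L) * D) * H :=
            mul_le_mul (hA.trans_eq rfl) hEH hE0.le (mul_nonneg hcL0 hD0)
          have g2 : (ρ' * P') * |E - E'| ≤ (C₁ * c₁) * ((H + H') * (K₂ * Q * D)) :=
            mul_le_mul hAmp hED (abs_nonneg _) (mul_nonneg hC₁.le hc₁.le)
          linarith only [g1, g2]
      _ = (c₁ + C₁ * L) * D * H + C₁ * c₁ * ((H + H') * (K₂ * Q * D)) := by ring
  have step1 : (c₁ + C₁ * L) * D * H + C₁ * c₁ * ((H + H') * (K₂ * Q * D)) ≤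
      (c₁ + C₁ * L + C₁ * c₁ * K₂) * ((H + H') * (Q * D)) := by
    have h5 : D * H ≤ (H + H') * (Q * D) := by
      linarith only [mul_le_mul_of_nonneg_right hHle hD0]
    linarith only [mul_le_mul_of_nonneg_left h5 hcL0]
  have step2 : (c₁ + C₁ * L + C₁ * c₁ * K₂) * ((H + H') * (Q * D)) ≤
      (c₁ + C₁ * L + C₁ * c₁ * K₂) / c₀ * ((P * H + P' * H') * (Q * D)) := by
    have hnum0 : (0:ℝ) ≤ c₁ + C₁ * L + C₁ * c₁ * K₂ := by positivity
    have e : (c₁ + C₁ * L + C₁ * c₁ * K₂) * ((H + H') * (Q * D))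
        = (c₁ + C₁ * L + C₁ * c₁ * K₂) / c₀ * ((c₀ * (H + H')) * (Q * D)) := by
      field_simp
    rw [e]
    exact mul_le_mul_of_nonneg_left
      (mul_le_mul_of_nonneg_right hXlb (mul_nonneg hQ0 hD0))
      (div_nonneg hnum0 hc₀.le)
  calc |ρ * P * E - ρ' * P' * E'|
      ≤ (c₁ + C₁ * L) * D * H + C₁ * c₁ * ((H + H') * (K₂ * Q * D)) := main1
    _ ≤ (c₁ + C₁ * L + C₁ * c₁ * K₂) * ((H + H') * (Q * D)) := step1
    _ ≤ (c₁ + C₁ * L + C₁ * c₁ * K₂) / c₀ * ((P * H + P' * H') * (Q * D)) := step2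
    _ = (c₁ + C₁ * L + C₁ * c₁ * K₂) / c₀ * (P * H + P' * H') * Q * D := by ring
end
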